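/- Let a_1,...,a_m ∈ ℝ[X], S := {a_1 ≥ 0,...,a_m ≥ 0} bounded, ρ > 0 with ρ − ‖X‖² strictly positive on S, and f ∈ ℝ[X] strictly positive on S. Then f belongs to the quadratic module generated by a_1,...,a_m and ρ − ‖X‖². -/

import Mathlib

/-!
The quadratic module `M` generated by the `a j` and `ρ - ‖X‖²` is archimedean: the `p` with
`N ± p ∈ M` for some real `N` form an `ℝ`-subalgebra, which contains each `X i` because
`ρ - X i ^ 2 ∈ M`.

Let `M` be an archimedean quadratic module and `h` positive under every `ℝ`-algebra map `φ` to `ℝ`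
that is nonnegative on `M`. If `-1 ∉ M - ΣR² h`, Zorn gives a maximal proper quadratic module
`T ⊇ M - ΣR² h`; then `T ∪ -T` is everything, `T ∩ -T` is an ideal, and
`p ↦ inf {r | r - p ∈ T}` is such a `φ` with `φ h ≤ 0`. Hence `σ h - 1 ∈ M` for a sum of squares
`σ`. Then `q = 1 - t σ` for a small `t > 0` satisfies `q² ≤ c < 1` and `h (1 - q²) ≥ 0` modulo `M`,
so `h = h (1 - q^(2n)) + q^(2n) h ≥ -N cⁿ`: `h + ε ∈ M` for every `ε > 0` (Schweighofer).
Since `S` is compact, this applies to `f - ε` for some `ε > 0`.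
-/

open Finset MvPolynomial

/-- `p` is a sum of squares. -/
def IsSOS {d : ℕ} (p : MvPolynomial (Fin d) ℝ) : Prop :=
  ∃ (k : ℕ) (q : Fin k → MvPolynomial (Fin d) ℝ), p = ∑ j, q j ^ 2

/-- The quadratic module generated by a finite family `a : ι → ℝ[X]`. -/
def QM {d : ℕ} {ι : Type*} [Fintype ι] (a : ι → MvPolynomial (Fin d) ℝ) :
    Set (MvPolynomial (Fin d) ℝ) :=
  {f | ∃ (σ₀ : MvPolynomial (Fin d) ℝ) (σ : ι → MvPolynomial (Fin d) ℝ),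
        IsSOS σ₀ ∧ (∀ i, IsSOS (σ i)) ∧ f = σ₀ + ∑ i, σ i * a i}

/-- `‖X‖² = X₁² + ⋯ + X_d²`. -/
noncomputable def normSq (d : ℕ) : MvPolynomial (Fin d) ℝ := ∑ i : Fin d, X i ^ 2

variable {R : Type*} [CommRing R]

structure IsQuadraticModule (T : Set R) : Prop where
  one_mem : 1 ∈ T
  add_mem {p q : R} : p ∈ T → q ∈ T → p + q ∈ T
  sq_mul_mem (a : R) {p : R} : p ∈ T → a ^ 2 * p ∈ T

def IsProperQuadraticModule (T : Set R) : Prop :=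
  IsQuadraticModule T ∧ (-1 : R) ∉ T

/-- `T + Σ R² · b`, the quadratic module generated by `T` and `b` when `T` is one. -/
def quadAdjoin (T : Set R) (b : R) : Set R :=
  {p | ∃ t ∈ T, ∃ σ, IsSumSq σ ∧ p = t + σ * b}

theorem subset_quadAdjoin (T : Set R) (b : R) : T ⊆ quadAdjoin T b :=
  fun p hp => ⟨p, hp, 0, .zero, by simp⟩

def IsArchimedean [Algebra ℝ R] (T : Set R) : Prop :=
  ∀ p : R, ∃ N : ℝ, algebraMap ℝ R N - p ∈ T

theorem IsArchimedean.mono [Algebra ℝ R] {T T' : Set R} (h : IsArchimedean T) (hTT' : T ⊆ T') :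
    IsArchimedean T' :=
  fun p => (h p).imp fun _ hN => hTT' hN

namespace IsQuadraticModule

variable {T : Set R} (hT : IsQuadraticModule T)
include hT

theorem sq_mem (a : R) : a ^ 2 ∈ T := by simpa using hT.sq_mul_mem a hT.one_mem

theorem zero_mem : (0 : R) ∈ T := by simpa using hT.sq_mem 0

theorem sum_mem {ι : Type*} {s : Finset ι} {g : ι → R} (h : ∀ i ∈ s, g i ∈ T) :
    ∑ i ∈ s, g i ∈ T :=
  Finset.sum_induction g (· ∈ T) (fun _ _ => hT.add_mem) hT.zero_mem h

theorem isSumSq_mul_mem {σ p : R} (hσ : IsSumSq σ) (hp : p ∈ T) : σ * p ∈ T := by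
  induction hσ with
  | zero => simpa using hT.zero_mem
  | sq_add a _ ih => rw [add_mul, ← sq]; exact hT.add_mem (hT.sq_mul_mem a hp) ih

theorem mem_of_isSumSq {σ : R} (hσ : IsSumSq σ) : σ ∈ T := by
  simpa using hT.isSumSq_mul_mem hσ hT.one_mem

theorem self_mem_quadAdjoin (b : R) : b ∈ quadAdjoin T b :=
  ⟨0, hT.zero_mem, 1, .one, by simp⟩

theorem adjoin (b : R) : IsQuadraticModule (quadAdjoin T b) where
  one_mem := subset_quadAdjoin T b hT.one_mem
  add_mem := by
    rintro _ _ ⟨t, ht, σ, hσ, rfl⟩ ⟨t', ht', σ', hσ', rfl⟩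
    exact ⟨t + t', hT.add_mem ht ht', σ + σ', hσ.add hσ', by ring⟩
  sq_mul_mem a := by
    rintro _ ⟨t, ht, σ, hσ, rfl⟩
    exact ⟨a ^ 2 * t, hT.sq_mul_mem a ht, a ^ 2 * σ, (IsSquare.sq a).isSumSq.mul hσ, by ring⟩

theorem mul_one_sub_sq_pow_mem {h q : R} (hq : h * (1 - q ^ 2) ∈ T) (n : ℕ) :
    h * (1 - (q ^ n) ^ 2) ∈ T := by
  induction n with
  | zero => simpa using hT.zero_mem
  | succ n ih =>
    convert hT.add_mem ih (hT.sq_mul_mem (q ^ n) hq) using 1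
    ring

section Real

variable [Algebra ℝ R]

theorem algebraMap_mul_mem {c : ℝ} (hc : 0 ≤ c) {p : R} (hp : p ∈ T) :
    algebraMap ℝ R c * p ∈ T := by
  simpa [← map_pow, Real.sq_sqrt hc] using hT.sq_mul_mem (algebraMap ℝ R √c) hp

theorem algebraMap_mem {c : ℝ} (hc : 0 ≤ c) : algebraMap ℝ R c ∈ T := by
  simpa using hT.algebraMap_mul_mem hc hT.one_mem

theorem mem_of_algebraMap_mul_mem {c : ℝ} (hc : 0 < c) {p : R} (h : algebraMap ℝ R c * p ∈ T) :
    p ∈ T := by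
  simpa [← mul_assoc, ← map_mul, inv_mul_cancel₀ hc.ne'] using
    hT.algebraMap_mul_mem (inv_nonneg.2 hc.le) h

theorem nonneg_of_algebraMap_mem (hT₁ : (-1 : R) ∉ T) {c : ℝ} (hc : algebraMap ℝ R c ∈ T) :
    0 ≤ c := by
  by_contra! hneg
  exact hT₁ (hT.mem_of_algebraMap_mul_mem (neg_pos.2 hneg) (by simpa using hc))

theorem sq_sub_sq_mem {c : ℝ} (hc : 0 < c) {p : R} (h₁ : algebraMap ℝ R c - p ∈ T)
    (h₂ : algebraMap ℝ R c + p ∈ T) : algebraMap ℝ R (c ^ 2) - p ^ 2 ∈ T := by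
  -- `2 c (c² - p²) = (c + p)² (c - p) + (c - p)² (c + p)`
  refine hT.mem_of_algebraMap_mul_mem (by positivity : 0 < 2 * c) ?_
  convert hT.add_mem (hT.sq_mul_mem (algebraMap ℝ R c + p) h₁)
    (hT.sq_mul_mem (algebraMap ℝ R c - p) h₂) using 1
  simp only [map_mul, map_pow, map_ofNat]
  ring

theorem exists_one_le (harch : IsArchimedean T) (p : R) :
    ∃ N : ℝ, 1 ≤ N ∧ algebraMap ℝ R N - p ∈ T := by
  obtain ⟨N, hN⟩ := harch p
  refine ⟨max N 1, le_max_right N 1, ?_⟩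
  convert hT.add_mem hN (hT.algebraMap_mem (sub_nonneg.2 (le_max_left N 1))) using 1
  rw [map_sub]
  ring

def boundedSubalgebra : Subalgebra ℝ R where
  carrier := {p | ∃ N : ℝ, 0 < N ∧ algebraMap ℝ R N - p ∈ T ∧ algebraMap ℝ R N + p ∈ T}
  add_mem' := by
    rintro p q ⟨N, hN, hNp, hNp'⟩ ⟨L, hL, hLq, hLq'⟩
    refine ⟨N + L, by positivity, ?_, ?_⟩
    · convert hT.add_mem hNp hLq using 1; rw [map_add]; ring
    · convert hT.add_mem hNp' hLq' using 1; rw [map_add]; ring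
  mul_mem' := by
    -- `2 ((N² + L²) / 2 ∓ p q) = (N² - p²) + (L² - q²) + (p ∓ q)²`
    rintro p q ⟨N, hN, hNp, hNp'⟩ ⟨L, hL, hLq, hLq'⟩
    have hp := hT.sq_sub_sq_mem hN hNp hNp'
    have hq := hT.sq_sub_sq_mem hL hLq hLq'
    have h2 : 2 * algebraMap ℝ R ((N ^ 2 + L ^ 2) / 2) =
        algebraMap ℝ R (N ^ 2) + algebraMap ℝ R (L ^ 2) := by
      rw [← map_ofNat (algebraMap ℝ R), ← map_mul, ← map_add]; ring_nf
    refine ⟨(N ^ 2 + L ^ 2) / 2, by positivity, ?_, ?_⟩ <;>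
      refine hT.mem_of_algebraMap_mul_mem two_pos ?_ <;> rw [map_ofNat]
    · convert hT.add_mem (hT.add_mem hp hq) (hT.sq_mem (p - q)) using 1
      linear_combination h2
    · convert hT.add_mem (hT.add_mem hp hq) (hT.sq_mem (p + q)) using 1
      linear_combination h2
  algebraMap_mem' c := by
    refine ⟨|c| + 1, by positivity, ?_, ?_⟩
    · rw [← map_sub]; exact hT.algebraMap_mem (by linarith [le_abs_self c])
    · rw [← map_add]; exact hT.algebraMap_mem (by linarith [neg_abs_le c])

theorem mem_boundedSubalgebra_of_sub_sq_mem {c : ℝ} {x : R} (h : algebraMap ℝ R c - x ^ 2 ∈ T) :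
    x ∈ hT.boundedSubalgebra := by
  -- `(|c| + 1) ± 2 x = (x ± 1)² + (c - x²) + (|c| - c)`
  have hc := hT.algebraMap_mem (sub_nonneg.2 (le_abs_self c))
  have h2 : 2 * algebraMap ℝ R ((|c| + 1) / 2) = algebraMap ℝ R |c| + 1 := by
    rw [← map_ofNat (algebraMap ℝ R), ← map_mul, ← map_one (algebraMap ℝ R), ← map_add]; ring_nf
  refine ⟨(|c| + 1) / 2, by positivity, ?_, ?_⟩ <;>
    refine hT.mem_of_algebraMap_mul_mem two_pos ?_ <;> rw [map_ofNat]
  · convert hT.add_mem (hT.add_mem (hT.sq_mem (x - 1)) h) hc using 1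
    rw [map_sub]; linear_combination h2
  · convert hT.add_mem (hT.add_mem (hT.sq_mem (x + 1)) h) hc using 1
    rw [map_sub]; linear_combination h2

theorem isArchimedean_of_boundedSubalgebra_eq_top (h : hT.boundedSubalgebra = ⊤) :
    IsArchimedean T := fun p => by
  obtain ⟨N, -, hN, -⟩ := h ▸ Algebra.mem_top (x := p)
  exact ⟨N, hN⟩

theorem pow_sub_sq_pow_mem {c : ℝ} (hc : 0 ≤ c) {q : R} (h : algebraMap ℝ R c - q ^ 2 ∈ T)
    (n : ℕ) : algebraMap ℝ R (c ^ n) - (q ^ n) ^ 2 ∈ T := by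
  induction n with
  | zero => simpa using hT.zero_mem
  | succ n ih =>
    convert hT.add_mem (hT.algebraMap_mul_mem hc ih) (hT.sq_mul_mem (q ^ n) h) using 1
    simp only [map_pow]
    ring

theorem add_algebraMap_mem_of_mul_one_sub_sq_mem {c N ε : ℝ} {h q : R} (hc : 0 ≤ c)
    (hc₁ : c < 1) (hq : algebraMap ℝ R c - q ^ 2 ∈ T) (hN : 0 < N)
    (hNh : algebraMap ℝ R N + h ∈ T) (hhq : h * (1 - q ^ 2) ∈ T) (hε : 0 < ε) :
    h + algebraMap ℝ R ε ∈ T := by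
  -- `h + ε = h (1 - q^(2n)) + q^(2n) (N + h) + N (cⁿ - q^(2n)) + (ε - N cⁿ)`
  obtain ⟨n, hn⟩ := exists_pow_lt_of_lt_one (div_pos hε hN) hc₁
  have hNn : N * c ^ n ≤ ε := ((lt_div_iff₀' hN).1 hn).le
  convert hT.add_mem (hT.add_mem (hT.add_mem (hT.mul_one_sub_sq_pow_mem hhq n)
    (hT.sq_mul_mem (q ^ n) hNh)) (hT.algebraMap_mul_mem hN.le (hT.pow_sub_sq_pow_mem hc hq n)))
    (hT.algebraMap_mem (sub_nonneg.2 hNn)) using 1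
  simp only [map_sub, map_mul, map_pow]
  ring

theorem exists_mul_one_sub_sq_mem {σ h : R} (hσ : IsSumSq σ) (hσh : σ * h - 1 ∈ T) {k N : ℝ}
    (hk₁ : 1 ≤ k) (hk : algebraMap ℝ R k - σ ∈ T) (hN₁ : 1 ≤ N) (hN : algebraMap ℝ R N - h ∈ T) :
    ∃ c : ℝ, 0 ≤ c ∧ c < 1 ∧ ∃ q : R, algebraMap ℝ R c - q ^ 2 ∈ T ∧ h * (1 - q ^ 2) ∈ T := by
  set t : ℝ := 1 / (2 * N * k ^ 2) with ht_def
  have ht : 0 < t := by positivity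
  have htNk : t * N * k ^ 2 = 1 / 2 := by rw [ht_def]; field_simp
  have htk : t * k ≤ 1 := by
    nlinarith [mul_nonneg (mul_nonneg ht.le (by linarith : 0 ≤ k)) (by nlinarith : 0 ≤ N * k - 1)]
  have htN : t / N ≤ 1 / 2 := by
    rw [div_le_iff₀ (by positivity)]
    nlinarith [mul_nonneg ht.le (by nlinarith : 0 ≤ N * k ^ 2 - 1)]
  set q := 1 - algebraMap ℝ R t * σ
  have hq : q ∈ T := by
    convert hT.add_mem (hT.algebraMap_mul_mem ht.le hk) (hT.algebraMap_mem (sub_nonneg.2 htk))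
      using 1
    simp only [q, map_sub, map_mul, map_one]
    ring
  have hcq : algebraMap ℝ R (1 - t / N) - q ∈ T := by
    -- `(1 - t/N) - q = (t/N) (σ (N - h) + (σ h - 1))`
    convert hT.algebraMap_mul_mem (by positivity : 0 ≤ t / N)
      (hT.add_mem (hT.isSumSq_mul_mem hσ hN) hσh) using 1
    have : algebraMap ℝ R (t / N) * algebraMap ℝ R N = algebraMap ℝ R t := by
      rw [← map_mul, div_mul_cancel₀ _ (by positivity)]
    simp only [q, map_sub, map_one]
    linear_combination -σ * this
  have hσ₂ := hT.sq_sub_sq_mem (by linarith) hk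
    (hT.add_mem (hT.algebraMap_mem (by linarith)) (hT.mem_of_isSumSq hσ))
  refine ⟨(1 - t / N) ^ 2, sq_nonneg _, by nlinarith [div_pos ht (by linarith : (0 : ℝ) < N)], q,
    hT.sq_sub_sq_mem (by linarith) hcq (hT.add_mem (hT.algebraMap_mem (by linarith)) hq), ?_⟩
  -- `h (1 - q²) = 2 t (σ h) - t² σ² h`, and `-σ² h ≥ -N σ² ≥ -N k²`
  convert hT.add_mem (hT.add_mem (hT.add_mem
    (hT.algebraMap_mem (by nlinarith : 0 ≤ 2 * t - t ^ 2 * N * k ^ 2))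
    (hT.algebraMap_mul_mem (by positivity : 0 ≤ 2 * t) hσh))
    (hT.algebraMap_mul_mem (sq_nonneg t) (hT.sq_mul_mem σ hN)))
    (hT.algebraMap_mul_mem (by positivity : 0 ≤ t ^ 2 * N) hσ₂) using 1
  simp only [q, map_sub, map_mul, map_pow, map_ofNat]
  ring

theorem add_algebraMap_mem_of_isSumSq_mul_sub_one_mem (harch : IsArchimedean T) {σ h : R}
    (hσ : IsSumSq σ) (hσh : σ * h - 1 ∈ T) {ε : ℝ} (hε : 0 < ε) :
    h + algebraMap ℝ R ε ∈ T := by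
  obtain ⟨k, hk₁, hk⟩ := hT.exists_one_le harch σ
  obtain ⟨N, hN₁, hN⟩ := hT.exists_one_le harch h
  obtain ⟨c, hc, hc₁, q, hq, hhq⟩ := hT.exists_mul_one_sub_sq_mem hσ hσh hk₁ hk hN₁ hN
  obtain ⟨N', hN'₁, hN'⟩ := hT.exists_one_le harch (-h)
  rw [sub_neg_eq_add] at hN'
  exact hT.add_algebraMap_mem_of_mul_one_sub_sq_mem hc hc₁ hq (by linarith) hN' hhq hε

def support : Ideal R where
  carrier := {p | p ∈ T ∧ -p ∈ T}
  add_mem' hp hq := ⟨hT.add_mem hp.1 hq.1, by rw [neg_add]; exact hT.add_mem hp.2 hq.2⟩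
  zero_mem' := ⟨hT.zero_mem, by simpa using hT.zero_mem⟩
  smul_mem' x p hp := by
    -- `4 x p = (x + 1)² p + (x - 1)² (-p)`
    refine ⟨hT.mem_of_algebraMap_mul_mem four_pos ?_, hT.mem_of_algebraMap_mul_mem four_pos ?_⟩
    · convert hT.add_mem (hT.sq_mul_mem (x + 1) hp.1) (hT.sq_mul_mem (x - 1) hp.2) using 1
      rw [map_ofNat, smul_eq_mul]; ring
    · convert hT.add_mem (hT.sq_mul_mem (x + 1) hp.2) (hT.sq_mul_mem (x - 1) hp.1) using 1
      rw [map_ofNat, smul_eq_mul]; ring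

theorem eq_zero_of_algebraMap_mem_support (hT₁ : (-1 : R) ∉ T) {c : ℝ}
    (hc : algebraMap ℝ R c ∈ hT.support) : c = 0 :=
  le_antisymm (neg_nonneg.1 (hT.nonneg_of_algebraMap_mem hT₁ (by simpa using hc.2)))
    (hT.nonneg_of_algebraMap_mem hT₁ hc.1)

end Real

end IsQuadraticModule

theorem exists_maximal_isProperQuadraticModule {T : Set R} (hT : IsProperQuadraticModule T) :
    ∃ T', T ⊆ T' ∧ Maximal IsProperQuadraticModule T' := by
  refine zorn_subset_nonempty {S | IsProperQuadraticModule S} (fun c hc hchain ⟨S, hS⟩ => ?_) T hT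
  have hmem {p q : R} (hp : p ∈ ⋃₀ c) (hq : q ∈ ⋃₀ c) : ∃ S ∈ c, p ∈ S ∧ q ∈ S := by
    obtain ⟨S₁, hS₁, hp⟩ := hp
    obtain ⟨S₂, hS₂, hq⟩ := hq
    rcases hchain.total hS₁ hS₂ with h | h
    exacts [⟨S₂, hS₂, h hp, hq⟩, ⟨S₁, hS₁, hp, h hq⟩]
  refine ⟨⋃₀ c, ⟨⟨⟨S, hS, (hc hS).1.one_mem⟩, fun hp hq => ?_, fun a p hp => ?_⟩, ?_⟩,
    fun _ => Set.subset_sUnion_of_mem⟩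
  · obtain ⟨S', hS', hp, hq⟩ := hmem hp hq
    exact ⟨S', hS', (hc hS').1.add_mem hp hq⟩
  · obtain ⟨S', hS', hp⟩ := hp
    exact ⟨S', hS', (hc hS').1.sq_mul_mem a hp⟩
  · rintro ⟨S', hS', h⟩
    exact (hc hS').2 h

section Maximal

variable {T : Set R} (hT : Maximal IsProperQuadraticModule T)
include hT

theorem neg_one_mem_quadAdjoin_of_maximal {b : R} (hb : b ∉ T) : -1 ∈ quadAdjoin T b := by
  by_contra h
  exact hb (hT.2 ⟨hT.1.1.adjoin b, h⟩ (subset_quadAdjoin T b) (hT.1.1.self_mem_quadAdjoin b))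

variable [Algebra ℝ R]

theorem mem_or_neg_mem_of_maximal (p : R) : p ∈ T ∨ -p ∈ T := by
  -- from `-1 = t₁ + s₁ p = t₂ - s₂ p` we get `-s₁ ∈ T`, so `s₁ p` lies in the support
  by_contra! hp
  obtain ⟨t₁, ht₁, s₁, hs₁, he₁⟩ := neg_one_mem_quadAdjoin_of_maximal hT hp.1
  obtain ⟨t₂, ht₂, s₂, hs₂, he₂⟩ := neg_one_mem_quadAdjoin_of_maximal hT hp.2
  have hQ := hT.1.1
  have hs₁' : -s₁ ∈ T := by
    convert hQ.add_mem (hQ.add_mem (hQ.isSumSq_mul_mem hs₂ ht₁) (hQ.isSumSq_mul_mem hs₁ ht₂))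
      (hQ.mem_of_isSumSq hs₂) using 1
    linear_combination s₂ * he₁ + s₁ * he₂
  have hsupp : s₁ * p ∈ hQ.support := hQ.support.mul_mem_right p ⟨hQ.mem_of_isSumSq hs₁, hs₁'⟩
  exact hT.1.2 (he₁ ▸ hQ.add_mem ht₁ hsupp.1)

theorem mem_of_forall_add_algebraMap_mem_of_maximal (harch : IsArchimedean T) {p : R}
    (hp : ∀ δ : ℝ, 0 < δ → p + algebraMap ℝ R δ ∈ T) : p ∈ T := by
  -- from `-1 = t + s p` and `s ≤ k` we get `-1 + δ k ∈ T` for every `δ > 0`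
  by_contra h
  obtain ⟨t, ht, s, hs, he⟩ := neg_one_mem_quadAdjoin_of_maximal hT h
  have hQ := hT.1.1
  obtain ⟨k, hk₁, hk⟩ := hQ.exists_one_le harch s
  have hδ : (0 : ℝ) < 1 / (2 * k) := by positivity
  have hmem := hQ.add_mem (hQ.add_mem ht (hQ.isSumSq_mul_mem hs (hp _ hδ)))
    (hQ.algebraMap_mul_mem hδ.le hk)
  have hk' : (1 / (2 * k)) * k - 1 = -(1 / 2 : ℝ) := by field_simp; ring
  have : algebraMap ℝ R ((1 / (2 * k)) * k - 1) ∈ T := by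
    convert hmem using 1
    simp only [map_sub, map_mul, map_one]
    linear_combination he
  rw [hk'] at this
  linarith [hQ.nonneg_of_algebraMap_mem hT.1.2 this]

theorem exists_sub_algebraMap_mem_support_of_maximal (harch : IsArchimedean T) (p : R) :
    ∃ c : ℝ, p - algebraMap ℝ R c ∈ hT.1.1.support := by
  have hQ := hT.1.1
  set U := {r : ℝ | algebraMap ℝ R r - p ∈ T}
  have hbdd : BddBelow U := by
    obtain ⟨N, hN⟩ := harch (-p)
    refine ⟨-N, fun r hr => ?_⟩
    have := hQ.nonneg_of_algebraMap_mem hT.1.2 (c := r + N)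
      (by convert hQ.add_mem hr hN using 1; rw [map_add]; ring)
    linarith
  refine ⟨sInf U, mem_of_forall_add_algebraMap_mem_of_maximal hT harch fun δ hδ => ?_, ?_⟩
  · have hnot : algebraMap ℝ R (sInf U - δ) - p ∉ T := fun hmem => by
      linarith [csInf_le hbdd hmem]
    convert (mem_or_neg_mem_of_maximal hT _).resolve_left hnot using 1
    rw [map_sub]; ring
  · rw [neg_sub]
    refine mem_of_forall_add_algebraMap_mem_of_maximal hT harch fun δ hδ => ?_
    obtain ⟨r, hr, hrδ⟩ := exists_lt_of_csInf_lt (harch p) (lt_add_of_pos_right (sInf U) hδ)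
    convert hQ.add_mem hr (hQ.algebraMap_mem (sub_nonneg.2 hrδ.le)) using 1
    rw [map_sub, map_add]; ring

theorem exists_algHom_nonneg_of_maximal (harch : IsArchimedean T) :
    ∃ φ : R →ₐ[ℝ] ℝ, ∀ p ∈ T, 0 ≤ φ p := by
  have hQ := hT.1.1
  choose α hα using exists_sub_algebraMap_mem_support_of_maximal hT harch
  have hα_eq {p : R} {c : ℝ} (hc : p - algebraMap ℝ R c ∈ hQ.support) : α p = c := by
    have h := hQ.support.sub_mem hc (hα p)
    rw [sub_sub_sub_cancel_left, ← map_sub] at h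
    linarith [hQ.eq_zero_of_algebraMap_mem_support hT.1.2 h]
  refine ⟨
    { toFun := α
      map_one' := hα_eq (by simp)
      map_mul' p q := hα_eq ?_
      map_zero' := hα_eq (by simp)
      map_add' p q := hα_eq ?_
      commutes' r := hα_eq (by simp) }, fun p hp => ?_⟩
  · convert hQ.support.add_mem (hQ.support.mul_mem_left p (hα q))
      (hQ.support.mul_mem_left (algebraMap ℝ R (α q)) (hα p)) using 1
    rw [map_mul]; ring
  · convert hQ.support.add_mem (hα p) (hα q) using 1
    rw [map_add]; ring
  · refine hQ.nonneg_of_algebraMap_mem hT.1.2 ?_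
    simpa using hQ.add_mem hp (hα p).2

end Maximal

namespace IsQuadraticModule

variable [Algebra ℝ R] {M : Set R} (hM : IsQuadraticModule M) (harch : IsArchimedean M)
include hM harch

theorem exists_isSumSq_mul_sub_one_mem {h : R}
    (hh : ∀ φ : R →ₐ[ℝ] ℝ, (∀ p ∈ M, 0 ≤ φ p) → 0 < φ h) :
    ∃ σ, IsSumSq σ ∧ σ * h - 1 ∈ M := by
  by_contra! hno
  have hproper : IsProperQuadraticModule (quadAdjoin M (-h)) := by
    refine ⟨hM.adjoin (-h), fun ⟨t, ht, σ, hσ, he⟩ => hno σ hσ ?_⟩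
    convert ht using 1
    linear_combination he
  obtain ⟨T, hMT, hT⟩ := exists_maximal_isProperQuadraticModule hproper
  obtain ⟨φ, hφ⟩ := exists_algHom_nonneg_of_maximal hT
    (harch.mono ((subset_quadAdjoin M (-h)).trans hMT))
  have hneg := hφ (-h) (hMT (hM.self_mem_quadAdjoin (-h)))
  have hpos := hh φ fun p hp => hφ p (hMT (subset_quadAdjoin M (-h) hp))
  rw [map_neg] at hneg
  linarith

theorem add_algebraMap_mem_of_forall_algHom_nonneg {p : R}
    (hp : ∀ φ : R →ₐ[ℝ] ℝ, (∀ q ∈ M, 0 ≤ φ q) → 0 ≤ φ p) {ε : ℝ} (hε : 0 < ε) :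
    p + algebraMap ℝ R ε ∈ M := by
  obtain ⟨σ, hσ, hσh⟩ := hM.exists_isSumSq_mul_sub_one_mem harch
    (h := p + algebraMap ℝ R (ε / 2)) fun φ hφ => by
      simpa using add_pos_of_nonneg_of_pos (hp φ hφ) (half_pos hε)
  simpa [add_assoc, ← map_add] using
    hM.add_algebraMap_mem_of_isSumSq_mul_sub_one_mem harch hσ hσh (half_pos hε)

end IsQuadraticModule

section Polynomial

variable {d : ℕ}

theorem isSOS_iff_isSumSq {p : MvPolynomial (Fin d) ℝ} : IsSOS p ↔ IsSumSq p := by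
  refine ⟨fun ⟨k, q, hp⟩ => hp ▸ IsSumSq.sum_sq _ q, fun hp => ?_⟩
  induction hp with
  | zero => exact ⟨0, Fin.elim0, by simp⟩
  | sq_add a _ ih =>
    obtain ⟨k, q, rfl⟩ := ih
    exact ⟨k + 1, Fin.cons a q, by simp [Fin.sum_univ_succ, sq]⟩

theorem isQuadraticModule_QM {ι : Type*} [Fintype ι] (g : ι → MvPolynomial (Fin d) ℝ) :
    IsQuadraticModule (QM g) where
  one_mem := ⟨1, 0, isSOS_iff_isSumSq.2 .one, fun _ => isSOS_iff_isSumSq.2 .zero, by simp⟩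
  add_mem := by
    rintro _ _ ⟨σ₀, σ, hσ₀, hσ, rfl⟩ ⟨τ₀, τ, hτ₀, hτ, rfl⟩
    simp only [isSOS_iff_isSumSq] at hσ₀ hσ hτ₀ hτ
    refine ⟨σ₀ + τ₀, σ + τ, isSOS_iff_isSumSq.2 (hσ₀.add hτ₀),
      fun i => isSOS_iff_isSumSq.2 ((hσ i).add (hτ i)), ?_⟩
    simp only [Pi.add_apply, add_mul, Finset.sum_add_distrib]
    ring
  sq_mul_mem a := by
    rintro _ ⟨σ₀, σ, hσ₀, hσ, rfl⟩
    simp only [isSOS_iff_isSumSq] at hσ₀ hσ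
    have ha : IsSumSq (a ^ 2) := (IsSquare.sq a).isSumSq
    refine ⟨a ^ 2 * σ₀, fun i => a ^ 2 * σ i, isSOS_iff_isSumSq.2 (ha.mul hσ₀),
      fun i => isSOS_iff_isSumSq.2 (ha.mul (hσ i)), ?_⟩
    simp only [mul_add, Finset.mul_sum, mul_assoc]

theorem apply_mem_QM {ι : Type*} [Fintype ι] [DecidableEq ι] (g : ι → MvPolynomial (Fin d) ℝ)
    (i : ι) : g i ∈ QM g := by
  refine ⟨0, Pi.single i 1, isSOS_iff_isSumSq.2 .zero, fun j => ?_, by simp [Pi.single_apply]⟩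
  rw [isSOS_iff_isSumSq]
  rcases eq_or_ne j i with rfl | hj
  · simp [IsSumSq.one]
  · simp [hj, IsSumSq.zero]

theorem IsQuadraticModule.isArchimedean_of_C_sub_normSq_mem
    {T : Set (MvPolynomial (Fin d) ℝ)} (hT : IsQuadraticModule T) {ρ : ℝ}
    (h : C ρ - normSq d ∈ T) : IsArchimedean T := by
  refine hT.isArchimedean_of_boundedSubalgebra_eq_top ?_
  rw [eq_top_iff, ← adjoin_range_X, Algebra.adjoin_le_iff]
  rintro _ ⟨i, rfl⟩
  refine hT.mem_boundedSubalgebra_of_sub_sq_mem (c := ρ) ?_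
  have : C ρ - X i ^ 2 = (C ρ - normSq d) + ∑ j ∈ univ.erase i, X j ^ 2 := by
    rw [normSq, ← add_sum_erase _ _ (mem_univ i)]
    ring
  rw [algebraMap_eq, this]
  exact hT.add_mem h (hT.sum_mem fun j _ => hT.sq_mem _)

theorem algHom_apply_eq_eval (φ : MvPolynomial (Fin d) ℝ →ₐ[ℝ] ℝ) (p : MvPolynomial (Fin d) ℝ) :
    φ p = eval (φ ∘ X) p :=
  DFunLike.congr_fun (aeval_unique φ) p

end Polynomial

theorem schweighofer_lemma_general (d m : ℕ) (a : Fin m → MvPolynomial (Fin d) ℝ)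
    (hSbdd : Bornology.IsBounded {x : Fin d → ℝ | ∀ j, 0 ≤ eval x (a j)})
    (ρ : ℝ)
    (f : MvPolynomial (Fin d) ℝ)
    (hf : ∀ x : Fin d → ℝ, (∀ j, 0 ≤ eval x (a j)) → 0 < eval x f) :
    f ∈ QM (Sum.elim a (fun _ : Unit => C ρ - normSq d)) := by
  set g := Sum.elim a fun _ : Unit => C ρ - normSq d
  have hM : IsQuadraticModule (QM g) := isQuadraticModule_QM g
  have harch : IsArchimedean (QM g) := hM.isArchimedean_of_C_sub_normSq_mem (apply_mem_QM g (.inr ()))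
  have hS : IsCompact {x : Fin d → ℝ | ∀ j, 0 ≤ eval x (a j)} := by
    refine Metric.isCompact_of_isClosed_isBounded ?_ hSbdd
    simpa only [Set.ofPred_forall] using
      isClosed_iInter fun j => isClosed_le continuous_const (continuous_eval (a j))
  obtain ⟨ε, hε, hfε⟩ := hS.exists_forall_le' (continuous_eval f).continuousOn hf
  have hfε' : ∀ φ : MvPolynomial (Fin d) ℝ →ₐ[ℝ] ℝ,
      (∀ q ∈ QM g, 0 ≤ φ q) → 0 ≤ φ (f - C ε) := fun φ hφ => by
    have hx : ∀ j, 0 ≤ eval (φ ∘ X) (a j) := fun j => by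
      simpa only [algHom_apply_eq_eval] using hφ (a j) (apply_mem_QM g (.inl j))
    simpa [algHom_apply_eq_eval φ] using hfε _ hx
  simpa [algebraMap_eq] using hM.add_algebraMap_mem_of_forall_algHom_nonneg harch hfε' hε

theorem schweighofer_lemma (d m : ℕ) (a : Fin m → MvPolynomial (Fin d) ℝ)
    (hSbdd : Bornology.IsBounded {x : Fin d → ℝ | ∀ j, 0 ≤ eval x (a j)})
    (ρ : ℝ) (hρ : 0 < ρ)
    (hρS : ∀ x : Fin d → ℝ, (∀ j, 0 ≤ eval x (a j)) → 0 < eval x (C ρ - normSq d))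
    (f : MvPolynomial (Fin d) ℝ)
    (hf : ∀ x : Fin d → ℝ, (∀ j, 0 ≤ eval x (a j)) → 0 < eval x f) :
    f ∈ QM (Sum.elim a (fun _ : Unit => C ρ - normSq d)) :=
  schweighofer_lemma_general d m a hSbdd ρ f hf
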